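/- The GK theory {¬A(¬p) ⊃ Kp, K(¬p)} has a GK model, and in every GK model M of this theory, K(M) = A(M) = Th({¬p}). -/

import Mathlib

namespace GKPaper

/-- Propositional formulas over atoms of type `α`. -/
inductive PForm (α : Type) : Type
  | bot : PForm α
  | atom : α → PForm α
  | neg : PForm α → PForm α
  | and : PForm α → PForm α → PForm α
  | or : PForm α → PForm α → PForm α

namespace PForm

def top {α : Type} : PForm α := neg bot

def imp {α : Type} (f g : PForm α) : PForm α := or (neg f) g

def eval {α : Type} (v : α → Prop) : PForm α → Prop
  | bot => False
  | atom a => v a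
  | neg f => ¬ eval v f
  | and f g => eval v f ∧ eval v g
  | or f g => eval v f ∨ eval v g

end PForm

/-- Classical propositional entailment. -/
def Entails {α : Type} (Γ : Set (PForm α)) (ψ : PForm α) : Prop :=
  ∀ v : α → Prop, (∀ φ ∈ Γ, φ.eval v) → ψ.eval v

/-- Propositional deductive closure. -/
def Th {α : Type} (Γ : Set (PForm α)) : Set (PForm α) := { ψ | Entails Γ ψ }

/-- GK formulas: propositional formulas with modalities K and A. -/
inductive GKForm (α : Type) : Type
  | bot : GKForm α
  | atom : α → GKForm α
  | neg : GKForm α → GKForm α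
  | and : GKForm α → GKForm α → GKForm α
  | or : GKForm α → GKForm α → GKForm α
  | K : GKForm α → GKForm α
  | A : GKForm α → GKForm α

def GKForm.imp {α : Type} (f g : GKForm α) : GKForm α := .or (.neg f) g

def PForm.toGK {α : Type} : PForm α → GKForm α
  | .bot => .bot
  | .atom a => .atom a
  | .neg f => .neg f.toGK
  | .and f g => .and f.toGK g.toGK
  | .or f g => .or f.toGK g.toGK

/-- A Kripke interpretation for the logic of GK. -/
structure Kripke (α : Type) where
  W : Type
  ne : Nonempty W
  pi : W → α → Prop
  RK : W → W → Prop
  RA : W → W → Prop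
  s : W

/-- Satisfaction of a GK formula at a world. -/
def Kripke.sat {α : Type} (M : Kripke α) : M.W → GKForm α → Prop
  | _, .bot => False
  | w, .atom a => M.pi w a
  | w, .neg f => ¬ M.sat w f
  | w, .and f g => M.sat w f ∧ M.sat w g
  | w, .or f g => M.sat w f ∨ M.sat w g
  | w, .K f => ∀ u, M.RK w u → M.sat u f
  | w, .A f => ∀ u, M.RA w u → M.sat u f

/-- K(M): the propositional formulas known in M. -/
def Kset {α : Type} (M : Kripke α) : Set (PForm α) :=
  { φ | M.sat M.s (.K φ.toGK) }

/-- A(M): the propositional formulas assumed in M. -/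
def Aset {α : Type} (M : Kripke α) : Set (PForm α) :=
  { φ | M.sat M.s (.A φ.toGK) }

def Kripke.models {α : Type} (M : Kripke α) (T : Set (GKForm α)) : Prop :=
  ∀ F ∈ T, M.sat M.s F

/-- GK model of a GK theory. -/
def GKModel {α : Type} (M : Kripke α) (T : Set (GKForm α)) : Prop :=
  M.models T ∧ Kset M = Aset M ∧
    ¬ ∃ M₁ : Kripke α, M₁.models T ∧ Aset M₁ = Aset M ∧ Kset M₁ ⊂ Kset M

/-- Pure GK formulas: Boolean combinations of K-atoms and A-atoms. -/
inductive PGK (α : Type) : Type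
  | bot : PGK α
  | Katom : PForm α → PGK α
  | Aatom : PForm α → PGK α
  | neg : PGK α → PGK α
  | and : PGK α → PGK α → PGK α
  | or : PGK α → PGK α → PGK α

def PGK.imp {α : Type} (f g : PGK α) : PGK α := .or (.neg f) g

def PGK.toGK {α : Type} : PGK α → GKForm α
  | .bot => .bot
  | .Katom φ => .K φ.toGK
  | .Aatom φ => .A φ.toGK
  | .neg f => .neg f.toGK
  | .and f g => .and f.toGK g.toGK
  | .or f g => .or f.toGK g.toGK

def Kripke.satP {α : Type} (M : Kripke α) (F : PGK α) : Prop := M.sat M.s F.toGK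

def Kripke.modelsP {α : Type} (M : Kripke α) (T : Set (PGK α)) : Prop :=
  ∀ F ∈ T, M.satP F

def GKModelP {α : Type} (M : Kripke α) (T : Set (PGK α)) : Prop :=
  M.modelsP T ∧ Kset M = Aset M ∧
    ¬ ∃ M₁ : Kripke α, M₁.modelsP T ∧ Aset M₁ = Aset M ∧ Kset M₁ ⊂ Kset M

def PGK.atomK {α : Type} : PGK α → Set (PForm α)
  | .bot => ∅
  | .Katom φ => {φ}
  | .Aatom _ => ∅
  | .neg f => f.atomK
  | .and f g => f.atomK ∪ g.atomK
  | .or f g => f.atomK ∪ g.atomK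

def PGK.atomA {α : Type} : PGK α → Set (PForm α)
  | .bot => ∅
  | .Katom _ => ∅
  | .Aatom φ => {φ}
  | .neg f => f.atomA
  | .and f g => f.atomA ∪ g.atomA
  | .or f g => f.atomA ∪ g.atomA

def AtomK {α : Type} (T : Set (PGK α)) : Set (PForm α) := ⋃ F ∈ T, F.atomK
def AtomA {α : Type} (T : Set (PGK α)) : Set (PForm α) := ⋃ F ∈ T, F.atomA

/-- Fresh atoms used in the translation: `k φ` for Kφ, `a φ` for Aφ,
    copies `pk p` (p^k), `pa p` (p^a), and witness copies `pkw ψ p` (p^{k_ψ}),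
    `paw ψ p` (p^{a_ψ}). -/
inductive XAtom (α : Type) : Type
  | k : PForm α → XAtom α
  | a : PForm α → XAtom α
  | pk : α → XAtom α
  | pa : α → XAtom α
  | pkw : PForm α → α → XAtom α
  | paw : PForm α → α → XAtom α

/-- tr_p: replace K-atoms and A-atoms by fresh atoms. -/
def PGK.trp {α : Type} : PGK α → PForm (XAtom α)
  | .bot => .bot
  | .Katom φ => .atom (.k φ)
  | .Aatom φ => .atom (.a φ)
  | .neg f => .neg f.trp
  | .and f g => .and f.trp g.trp
  | .or f g => .or f.trp g.trp

/-- `I` is a model of the formula Φ_T = tr_p(T) ∧ Φ_snd ∧ Φ^K_wit ∧ Φ^A_wit. -/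
def SatPhi {α : Type} (T : Set (PGK α)) (I : XAtom α → Prop) : Prop :=
  (∀ F ∈ T, (PGK.trp F).eval I) ∧
  (∀ φ ∈ AtomK T, I (.k φ) → φ.eval (fun p => I (.pk p))) ∧
  (∀ φ ∈ AtomA T, I (.a φ) → φ.eval (fun p => I (.pa p))) ∧
  (∀ ψ ∈ AtomK T, ¬ I (.k ψ) →
      ¬ ψ.eval (fun p => I (.pkw ψ p)) ∧
      ∀ φ ∈ AtomK T, I (.k φ) → φ.eval (fun p => I (.pkw ψ p))) ∧
  (∀ ψ ∈ AtomA T, ¬ I (.a ψ) →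
      ¬ ψ.eval (fun p => I (.paw ψ p)) ∧
      ∀ φ ∈ AtomA T, I (.a φ) → φ.eval (fun p => I (.paw ψ p)))

/-- Reiter defaults and default theories. -/
structure Default (α : Type) where
  pre : PForm α
  jus : List (PForm α)
  con : PForm α

structure DefaultTheory (α : Type) where
  W : Set (PForm α)
  D : Set (Default α)

/-- `G` contains W, is deductively closed, and closed under applicable defaults w.r.t. `S`. -/
def GammaClosed {α : Type} (Δ : DefaultTheory α) (S G : Set (PForm α)) : Prop :=
  Δ.W ⊆ G ∧ Th G = G ∧
    ∀ d ∈ Δ.D, d.pre ∈ G → (∀ ψ ∈ d.jus, PForm.neg ψ ∉ S) → d.con ∈ G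

/-- Γ(S): the smallest such set. -/
def Gamma {α : Type} (Δ : DefaultTheory α) (S : Set (PForm α)) : Set (PForm α) :=
  ⋂₀ { G | GammaClosed Δ S G }

def IsExtension {α : Type} (Δ : DefaultTheory α) (E : Set (PForm α)) : Prop :=
  Gamma Δ E = E

/-- Literals. -/
inductive Lit (α : Type) : Type
  | pos : α → Lit α
  | neg : α → Lit α

def Consistent {α : Type} (S : Set (Lit α)) : Prop :=
  ∀ a : α, ¬ (Lit.pos a ∈ S ∧ Lit.neg a ∈ S)

/-- Nested expressions. -/
inductive NExp (α : Type) : Type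
  | lit : Lit α → NExp α
  | top : NExp α
  | bot : NExp α
  | not : NExp α → NExp α
  | conj : NExp α → NExp α → NExp α
  | disj : NExp α → NExp α → NExp α

def NExp.sat {α : Type} (S : Set (Lit α)) : NExp α → Prop
  | .lit l => l ∈ S
  | .top => True
  | .bot => False
  | .not F => ¬ NExp.sat S F
  | .conj F G => NExp.sat S F ∧ NExp.sat S G
  | .disj F G => NExp.sat S F ∨ NExp.sat S G

def NExp.notFree {α : Type} : NExp α → Prop
  | .lit _ => True
  | .top => True
  | .bot => True
  | .not _ => False
  | .conj F G => F.notFree ∧ G.notFree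
  | .disj F G => F.notFree ∧ G.notFree

open Classical in
/-- The reduct of a nested expression w.r.t. `S`. -/
noncomputable def NExp.reduct {α : Type} (S : Set (Lit α)) : NExp α → NExp α
  | .lit l => .lit l
  | .top => .top
  | .bot => .bot
  | .not F => if NExp.sat S F then .bot else .top
  | .conj F G => .conj (F.reduct S) (G.reduct S)
  | .disj F G => .disj (F.reduct S) (G.reduct S)

structure Rule (α : Type) where
  head : NExp α
  body : NExp α

def SatProg {α : Type} (S : Set (Lit α)) (P : Set (Rule α)) : Prop :=
  ∀ r ∈ P, NExp.sat S r.body → NExp.sat S r.head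

/-- Answer sets of not-free programs: minimal consistent sets satisfying the program. -/
def IsAnswerSetNF {α : Type} (P : Set (Rule α)) (S : Set (Lit α)) : Prop :=
  Consistent S ∧ SatProg S P ∧
    ∀ S' : Set (Lit α), Consistent S' → SatProg S' P → S' ⊆ S → S' = S

noncomputable def ReductProg {α : Type} (S : Set (Lit α)) (P : Set (Rule α)) : Set (Rule α) :=
  (fun r => Rule.mk (r.head.reduct S) (r.body.reduct S)) '' P

def IsAnswerSet {α : Type} (P : Set (Rule α)) (S : Set (Lit α)) : Prop :=
  IsAnswerSetNF (ReductProg S P) S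

/-- Formulas in negation normal form. -/
inductive NNF (α : Type) : Type
  | top : NNF α
  | bot : NNF α
  | pos : α → NNF α
  | neg : α → NNF α
  | and : NNF α → NNF α → NNF α
  | or : NNF α → NNF α → NNF α

def NNF.eval {α : Type} (v : α → Prop) : NNF α → Prop
  | .top => True
  | .bot => False
  | .pos a => v a
  | .neg a => ¬ v a
  | .and f g => f.eval v ∧ g.eval v
  | .or f g => f.eval v ∨ g.eval v

/-- tr_ne: translate an NNF formula to a nested expression. -/
def NNF.toNExp {α : Type} : NNF α → NExp α
  | .top => .top
  | .bot => .bot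
  | .pos a => .lit (.pos a)
  | .neg a => .lit (.neg a)
  | .and f g => .conj f.toNExp g.toNExp
  | .or f g => .disj f.toNExp g.toNExp

/-- Autoepistemic formulas: propositional formulas with belief modality L. -/
inductive AEForm (α : Type) : Type
  | bot : AEForm α
  | atom : α → AEForm α
  | L : AEForm α → AEForm α
  | neg : AEForm α → AEForm α
  | and : AEForm α → AEForm α → AEForm α
  | or : AEForm α → AEForm α → AEForm α

def AEForm.imp {α : Type} (f g : AEForm α) : AEForm α := .or (.neg f) g

/-- Flatten an AE formula into a propositional formula treating L-atoms as fresh atoms. -/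
def AEForm.flatten {α : Type} : AEForm α → PForm (α ⊕ AEForm α)
  | .bot => .bot
  | .atom a => .atom (.inl a)
  | .L φ => .atom (.inr φ)
  | .neg f => .neg f.flatten
  | .and f g => .and f.flatten g.flatten
  | .or f g => .or f.flatten g.flatten

/-- Deductive closure in the modal language, treating L-atoms as atoms. -/
def ThAE {α : Type} (Γ : Set (AEForm α)) : Set (AEForm α) :=
  { ψ | Entails (AEForm.flatten '' Γ) ψ.flatten }

/-- Moore expansions. -/
def IsExpansion {α : Type} (A T : Set (AEForm α)) : Prop :=
  T = ThAE (A ∪ { F | ∃ φ ∈ T, F = AEForm.L φ } ∪ { F | ∃ φ ∉ T, F = AEForm.neg (AEForm.L φ) })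

def PForm.toAE {α : Type} : PForm α → AEForm α
  | .bot => .bot
  | .atom a => .atom a
  | .neg f => .neg f.toAE
  | .and f g => .and f.toAE g.toAE
  | .or f g => .or f.toAE g.toAE

/-- Disjunctive logic program rules. -/
structure DRule (α : Type) where
  head : List α
  pos : List α
  neg : List α

/-- `S'` satisfies the GL reduct of `P` w.r.t. `S`. -/
def SatDReduct {α : Type} (S' S : Set α) (P : Set (DRule α)) : Prop :=
  ∀ r ∈ P, (∀ a ∈ r.neg, a ∉ S) → (∀ a ∈ r.pos, a ∈ S') → ∃ a ∈ r.head, a ∈ S'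

def IsDAnswerSet {α : Type} (P : Set (DRule α)) (S : Set α) : Prop :=
  SatDReduct S S P ∧ ∀ S' ⊆ S, SatDReduct S' S P → S' = S

/-- The Lin–Zhou style translation of a disjunctive rule to a pure GK formula. -/
def DRule.toGK {α : Type} (r : DRule α) : PGK α :=
  PGK.imp
    (PGK.and
      (r.pos.foldr (fun a f => PGK.and (.Katom (.atom a)) f) (PGK.neg .bot))
      (r.neg.foldr (fun a f => PGK.and (.neg (.Aatom (.atom a))) f) (PGK.neg .bot)))
    (r.head.foldr (fun a f => PGK.or (.Katom (.atom a)) f) .bot)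

end GKPaper

/-! Every model of the theory knows `¬p`, so its knowledge contains `Th {¬p}`. In a GK model `M`
also `¬p ∈ A(M)`; replacing the `K`-successors of `M` by all `¬p`-valuations keeps `A(M)` and the
theory true and makes the knowledge exactly `Th {¬p}`, so minimality forces `K(M) = Th {¬p}`.
The interpretation in which both `K` and `A` range over all `¬p`-valuations is a GK model. -/

namespace GKPaper

variable {α : Type}

def validIn (S : Set (α → Prop)) : Set (PForm α) := {φ | ∀ v ∈ S, φ.eval v}

theorem subset_Th (Γ : Set (PForm α)) : Γ ⊆ Th Γ :=
  fun _ hφ _ hv => hv _ hφ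

theorem Th_neg_atom (p : α) : Th {.neg (.atom p)} = validIn {v | ¬ v p} := by
  ext ψ
  simp [Th, Entails, validIn, PForm.eval]

theorem Kripke.sat_toGK (M : Kripke α) (w : M.W) (φ : PForm α) :
    M.sat w φ.toGK ↔ φ.eval (M.pi w) := by
  induction φ with
  | bot | atom => rfl
  | neg f ih => exact not_congr ih
  | and f g ihf ihg => exact and_congr ihf ihg
  | or f g ihf ihg => exact or_congr ihf ihg

theorem mem_Kset {M : Kripke α} {φ : PForm α} :
    φ ∈ Kset M ↔ ∀ u, M.RK M.s u → φ.eval (M.pi u) :=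
  forall₂_congr fun u _ => M.sat_toGK u φ

theorem mem_Aset {M : Kripke α} {φ : PForm α} :
    φ ∈ Aset M ↔ ∀ u, M.RA M.s u → φ.eval (M.pi u) :=
  forall₂_congr fun u _ => M.sat_toGK u φ

theorem Th_subset_Kset {M : Kripke α} {Γ : Set (PForm α)} (h : Γ ⊆ Kset M) :
    Th Γ ⊆ Kset M :=
  fun _ hψ => mem_Kset.2 fun u hu => hψ (M.pi u) fun _ hφ => mem_Kset.1 (h hφ) u hu

def Kripke.ofValuations (SK SA : Set (α → Prop)) : Kripke α where
  W := α → Prop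
  ne := ⟨fun _ => False⟩
  pi := id
  RK _ v := v ∈ SK
  RA _ v := v ∈ SA
  s := fun _ => False

theorem Kset_ofValuations (SK SA : Set (α → Prop)) :
    Kset (Kripke.ofValuations SK SA) = validIn SK :=
  Set.ext fun _ => mem_Kset

theorem Aset_ofValuations (SK SA : Set (α → Prop)) :
    Aset (Kripke.ofValuations SK SA) = validIn SA :=
  Set.ext fun _ => mem_Aset

def Kripke.withK (M : Kripke α) (S : Set (α → Prop)) : Kripke α where
  W := M.W ⊕ (α → Prop)
  ne := ⟨.inl M.s⟩
  pi := Sum.elim M.pi id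
  RK _ := Sum.elim (fun _ => False) (· ∈ S)
  RA := Sum.LiftRel M.RA fun _ _ => False
  s := .inl M.s

theorem Kset_withK (M : Kripke α) (S : Set (α → Prop)) :
    Kset (M.withK S) = validIn S := by
  ext φ
  simp [mem_Kset, validIn, Kripke.withK]

theorem Aset_withK (M : Kripke α) (S : Set (α → Prop)) :
    Aset (M.withK S) = Aset M := by
  ext φ
  simp [mem_Aset, Kripke.withK]

abbrev negTheory (p : α) : Set (GKForm α) :=
  {GKForm.imp (.neg (.A (.neg (.atom p)))) (.K (.atom p)), GKForm.K (.neg (.atom p))}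

theorem models_negTheory_iff {M : Kripke α} {p : α} :
    M.models (negTheory p) ↔
      (.neg (.atom p) ∈ Aset M ∨ .atom p ∈ Kset M) ∧ .neg (.atom p) ∈ Kset M := by
  simp only [Kripke.models, Set.mem_insert_iff, Set.mem_singleton_iff, forall_eq_or_imp,
    forall_eq, GKForm.imp, Kripke.sat, not_not]
  rfl

theorem Th_subset_Kset_of_models_negTheory {M : Kripke α} {p : α}
    (hM : M.models (negTheory p)) : Th {.neg (.atom p)} ⊆ Kset M :=
  Th_subset_Kset (Set.singleton_subset_iff.2 (models_negTheory_iff.1 hM).2)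

theorem gkModel_ofValuations_negTheory (p : α) :
    GKModel (Kripke.ofValuations {v | ¬ v p} {v | ¬ v p}) (negTheory p) := by
  have hK := Kset_ofValuations {v | ¬ v p} {v | ¬ v p}
  have hA := Aset_ofValuations {v | ¬ v p} {v | ¬ v p}
  refine ⟨models_negTheory_iff.2 ⟨.inl ?_, ?_⟩, hK.trans hA.symm, ?_⟩
  · rw [hA]; exact fun _ hv => hv
  · rw [hK]; exact fun _ hv => hv
  · rintro ⟨M₁, hM₁, -, hlt⟩
    rw [hK, ← Th_neg_atom] at hlt
    exact hlt.not_ge (Th_subset_Kset_of_models_negTheory hM₁)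

theorem Kset_eq_Th_of_gkModel_negTheory {M : Kripke α} {p : α}
    (hM : GKModel M (negTheory p)) : Kset M = Th {.neg (.atom p)} := by
  obtain ⟨hmod, hKA, hmin⟩ := hM
  have hle := Th_subset_Kset_of_models_negTheory hmod
  have hK : Kset (M.withK {v | ¬ v p}) = Th {.neg (.atom p)} := by
    rw [Kset_withK, Th_neg_atom]
  have hnp : PForm.neg (.atom p) ∈ Kset (M.withK {v | ¬ v p}) :=
    hK ▸ subset_Th _ (Set.mem_singleton _)
  have hN : (M.withK {v | ¬ v p}).models (negTheory p) := by
    refine models_negTheory_iff.2 ⟨.inl ?_, hnp⟩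
    rw [Aset_withK, ← hKA]
    exact hle (subset_Th _ (Set.mem_singleton _))
  by_contra hne
  exact hmin ⟨_, hN, Aset_withK M _, hK ▸ hle.ssubset_of_ne (Ne.symm hne)⟩

end GKPaper

open GKPaper in
/-- the GK theory {¬A¬p ⊃ Kp, K¬p} has a GK model, and in every GK model M,
K(M) = A(M) = Th({¬p}). -/
theorem stmt5 {α : Type} (p : α) :
    (∃ M : Kripke α,
        GKModel M {GKForm.imp (.neg (.A (.neg (.atom p)))) (.K (.atom p)),
                   GKForm.K (.neg (.atom p))}) ∧
    ∀ M : Kripke α,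
        GKModel M {GKForm.imp (.neg (.A (.neg (.atom p)))) (.K (.atom p)),
                   GKForm.K (.neg (.atom p))} →
        Kset M = Th {PForm.neg (.atom p)} ∧ Aset M = Th {PForm.neg (.atom p)} := by
  refine ⟨⟨_, gkModel_ofValuations_negTheory p⟩, fun M hM => ?_⟩
  have hK := Kset_eq_Th_of_gkModel_negTheory hM
  exact ⟨hK, hM.2.1 ▸ hK⟩
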